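/- Suppose each scale function α_n is a constant function on I. Then for every b ∈ L^p(I) (1 ≤ p ≤ ∞), ‖0 *_T b‖_p ≤ Λ ‖(0 *_T b) − b‖_p. If moreover each α_n is constantly equal to Λ or to −Λ (i.e., α_n(t) = ±Λ for all n and all t ∈ I), then equality holds: ‖0 *_T b‖_p = Λ ‖(0 *_T b) − b‖_p. -/

import Mathlib

/-!
On `I n` the function `h = 0 *_T b` equals `cₙ · (h - b) ∘ Lₙ⁻¹`. The maps `Lₙ⁻¹` glue to one map
`φ : I → I`; since `Lₙ⁻¹` stretches `I n` by the factor `|I| / |I n|` and these reciprocal factors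
sum to `1`, `φ` preserves Lebesgue measure on `I`. Hence `|h| ≤ Λ |(h - b) ∘ φ|` a.e., with
equality when every `|cₙ| = Λ`, and taking `L^p` norms, which composition with `φ` preserves,
gives both claims for every `p` at once.
-/

open MeasureTheory ENNReal

noncomputable section

/-- The inverse of the increasing affine map `L n` sending `[x 0, x N]` onto
`[x n, x (n+1)]` (so `L n (x 0) = x n.castSucc` and `L n (x N) = x n.succ`). -/
def Linv {N : ℕ} (x : Fin (N + 1) → ℝ) (n : Fin N) (y : ℝ) : ℝ :=
  x 0 + (y - x n.castSucc) * (x (Fin.last N) - x 0) / (x n.succ - x n.castSucc)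

/-- The subinterval `I n` of the partition: `[x 0, x 1]` for `n = 0` and
`(x n, x (n+1)]` otherwise. -/
def subInt {N : ℕ} (x : Fin (N + 1) → ℝ) (n : Fin N) : Set ℝ :=
  if n.val = 0 then Set.Icc (x n.castSucc) (x n.succ)
  else Set.Ioc (x n.castSucc) (x n.succ)

/-- `h` is the image of `g` under the Read–Bajraktarević operator `T_{f,b}` with
scale functions `α`, almost everywhere: on each `I n`,
`h = f + (α n ∘ Lₙ⁻¹) · ((g - b) ∘ Lₙ⁻¹)`. -/
def RBEq {N : ℕ} (μ : Measure ℝ) (x : Fin (N + 1) → ℝ) (α : Fin N → ℝ → ℝ)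
    (f b g h : ℝ → ℝ) : Prop :=
  ∀ n : Fin N, ∀ᵐ t ∂μ, t ∈ subInt x n →
    h t = f t + α n (Linv x n t) * (g (Linv x n t) - b (Linv x n t))

/-- `h` satisfies the self-referential equation of `T_{f,b}`, i.e. `h` is a fixed
point of `T_{f,b}`; `h` is then the fractal convolution `f *_T b`. -/
def SelfRef {N : ℕ} (μ : Measure ℝ) (x : Fin (N + 1) → ℝ) (α : Fin N → ℝ → ℝ)
    (f b h : ℝ → ℝ) : Prop :=
  RBEq μ x α f b h h

section General

open Function

variable {α β E F : Type*} [MeasurableSpace α] [MeasurableSpace β]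
  [NormedAddCommGroup E] [NormedAddCommGroup F]

theorem MeasureTheory.Measure.map_eq_of_map_restrict_eq_smul {ι : Type*} [Fintype ι]
    {μ : Measure α} {ν : Measure β} {J : ι → Set α} {f : α → β} {L : ι → α → β} {w : ι → ℝ≥0∞}
    (hf : AEMeasurable f μ) (hJ : ∀ i, MeasurableSet (J i)) (hdisj : Pairwise (Disjoint on J))
    (hcover : ∀ᵐ a ∂μ, a ∈ ⋃ i, J i) (hfL : ∀ i, Set.EqOn f (L i) (J i))
    (hL : ∀ i, (μ.restrict (J i)).map (L i) = w i • ν) (hw : ∑ i, w i = 1) :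
    μ.map f = ν := by
  have hμ : μ = Measure.sum fun i => μ.restrict (J i) := by
    rw [← Measure.restrict_iUnion hdisj hJ, Measure.restrict_eq_self_of_ae_mem hcover]
  rw [hμ] at hf ⊢
  rw [Measure.map_sum hf, Measure.sum_fintype]
  calc ∑ i, (μ.restrict (J i)).map f = ∑ i, w i • ν := by
        refine Finset.sum_congr rfl fun i _ => ?_
        rw [← hL i]
        exact Measure.map_congr (ae_restrict_of_forall_mem (hJ i) (hfL i))
    _ = ν := by rw [← Finset.sum_smul, hw, one_smul]

theorem eLpNorm_eq_mul_of_norm_eq_comp {μ : Measure α} {ν : Measure β} {p : ℝ≥0∞} {φ : α → β}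
    (hφ : MeasurePreserving φ μ ν) {h : α → E} {g : β → F} (hg : AEStronglyMeasurable g ν)
    {c : ℝ} (hc : 0 ≤ c) (heq : ∀ᵐ a ∂μ, ‖h a‖ = c * ‖g (φ a)‖) :
    eLpNorm h p μ = ENNReal.ofReal c * eLpNorm g p ν := by
  have hnorm : ∀ᵐ a ∂μ, ‖h a‖ = ‖(c • ((‖g ·‖) ∘ φ)) a‖ := by
    filter_upwards [heq] with a ha
    simp [ha, abs_of_nonneg hc]
  rw [eLpNorm_congr_norm_ae hnorm, eLpNorm_const_smul,
    eLpNorm_comp_measurePreserving hg.norm hφ, eLpNorm_norm, Real.enorm_of_nonneg hc]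

theorem eLpNorm_le_mul_of_norm_le_comp {μ : Measure α} {ν : Measure β} {p : ℝ≥0∞} {φ : α → β}
    (hφ : MeasurePreserving φ μ ν) {h : α → E} {g : β → F} (hg : AEStronglyMeasurable g ν)
    {c : ℝ} (hc : 0 ≤ c) (hle : ∀ᵐ a ∂μ, ‖h a‖ ≤ c * ‖g (φ a)‖) :
    eLpNorm h p μ ≤ ENNReal.ofReal c * eLpNorm g p ν := by
  calc eLpNorm h p μ ≤ eLpNorm (fun a => c * ‖g (φ a)‖) p μ := by
        refine eLpNorm_mono_ae ?_
        filter_upwards [hle] with a ha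
        rwa [Real.norm_of_nonneg (by positivity)]
    _ = ENNReal.ofReal c * eLpNorm g p ν :=
        eLpNorm_eq_mul_of_norm_eq_comp hφ hg hc (.of_forall fun a => by
          rw [Real.norm_of_nonneg (by positivity)])

theorem map_volume_restrict_Icc_affine {a : ℝ} (ha : 0 < a) (b u v : ℝ) :
    (volume.restrict (Set.Icc u v)).map (fun t => a * t + b)
      = ENNReal.ofReal a⁻¹ • volume.restrict (Set.Icc (a * u + b) (a * v + b)) := by
  have hmeas : Measurable fun t : ℝ => a * t + b := by fun_prop
  have hpre : (fun t => a * t + b) ⁻¹' Set.Icc (a * u + b) (a * v + b) = Set.Icc u v := by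
    ext t
    simp only [Set.mem_preimage, Set.mem_Icc, add_le_add_iff_right, mul_le_mul_iff_right₀ ha]
  have hvol : volume.map (fun t : ℝ => a * t + b) = ENNReal.ofReal a⁻¹ • volume := by
    change volume.map ((· + b) ∘ (a * ·)) = _
    rw [← Measure.map_map (measurable_add_const b) (measurable_const_mul a),
      Real.map_volume_mul_left ha.ne', Measure.map_smul, map_add_right_eq_self,
      abs_of_pos (inv_pos.2 ha)]
  rw [← hpre, ← Measure.restrict_map hmeas measurableSet_Icc, hvol, Measure.restrict_smul]

theorem Fin.Ioc_subset_iUnion_Ioc_castSucc_succ {X : Type*} [LinearOrder X] {n : ℕ}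
    (x : Fin (n + 1) → X) :
    Set.Ioc (x 0) (x (Fin.last n)) ⊆ ⋃ i : Fin n, Set.Ioc (x i.castSucc) (x i.succ) := by
  induction n with
  | zero => simp
  | succ n ih =>
    rw [Set.iUnion_fin_add_one_eq_iUnion_castSucc]
    refine Set.Ioc_subset_Ioc_union_Ioc.trans (Set.union_subset_union ?_ subset_rfl)
    have := ih (x ∘ Fin.castSucc)
    simp only [Function.comp_def, Fin.succ_castSucc] at this ⊢
    exact this

theorem Fin.sum_succ_sub_castSucc {M : Type*} [AddCommGroup M] {n : ℕ} (x : Fin (n + 1) → M) :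
    ∑ i : Fin n, (x i.succ - x i.castSucc) = x (Fin.last n) - x 0 := by
  induction n with
  | zero => simp
  | succ n ih =>
    have := ih (x ∘ Fin.castSucc)
    simp only [Function.comp_apply, ← Fin.succ_castSucc] at this
    rw [Fin.sum_univ_castSucc, this]
    simp

theorem StrictMono.apply_zero_lt_apply_last {X : Type*} [Preorder X] {n : ℕ}
    {x : Fin (n + 1) → X} (hx : StrictMono x) (hn : 0 < n) : x 0 < x (Fin.last n) :=
  hx (by rw [Fin.lt_def]; simpa using hn)

theorem Lp.norm_eq_of_ae_eq_const {μ : Measure α} (hμ : μ ≠ 0) {f : Lp E ∞ μ} {c : E}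
    (hf : f =ᵐ[μ] fun _ => c) : ‖f‖ = ‖c‖ := by
  rw [Lp.norm_def, eLpNorm_congr_ae hf, eLpNorm_exponent_top, eLpNormEssSup_const c hμ,
    toReal_enorm]

theorem Lp.norm_le_mul_norm_of_eLpNorm_le {μ : Measure α} {p : ℝ≥0∞} {f : Lp E p μ}
    {g : Lp F p μ} {c : ℝ} (hc : 0 ≤ c) (h : eLpNorm f p μ ≤ ENNReal.ofReal c * eLpNorm g p μ) :
    ‖f‖ ≤ c * ‖g‖ := by
  rw [Lp.norm_def, Lp.norm_def, ← ENNReal.toReal_ofReal hc, ← ENNReal.toReal_mul]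
  exact ENNReal.toReal_mono (mul_ne_top ofReal_ne_top (Lp.eLpNorm_ne_top _)) h

theorem Lp.norm_eq_mul_norm_of_eLpNorm_eq {μ : Measure α} {p : ℝ≥0∞} {f : Lp E p μ}
    {g : Lp F p μ} {c : ℝ} (hc : 0 ≤ c) (h : eLpNorm f p μ = ENNReal.ofReal c * eLpNorm g p μ) :
    ‖f‖ = c * ‖g‖ := by
  rw [Lp.norm_def, Lp.norm_def, h, ENNReal.toReal_mul, ENNReal.toReal_ofReal hc]

end General

section Partition

open Function

variable {N : ℕ} {x : Fin (N + 1) → ℝ}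

theorem measurableSet_subInt (x : Fin (N + 1) → ℝ) (n : Fin N) : MeasurableSet (subInt x n) := by
  unfold subInt
  split_ifs
  exacts [measurableSet_Icc, measurableSet_Ioc]

theorem Ioc_subset_subInt (x : Fin (N + 1) → ℝ) (n : Fin N) :
    Set.Ioc (x n.castSucc) (x n.succ) ⊆ subInt x n := by
  unfold subInt
  split_ifs
  exacts [Set.Ioc_subset_Icc_self, subset_rfl]

theorem subInt_subset_Icc (x : Fin (N + 1) → ℝ) (n : Fin N) :
    subInt x n ⊆ Set.Icc (x n.castSucc) (x n.succ) := by
  unfold subInt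
  split_ifs
  exacts [subset_rfl, Set.Ioc_subset_Icc_self]

theorem subInt_ae_eq_Icc (x : Fin (N + 1) → ℝ) (n : Fin N) :
    subInt x n =ᵐ[volume] Set.Icc (x n.castSucc) (x n.succ) := by
  unfold subInt
  split_ifs
  exacts [.rfl, Ioc_ae_eq_Icc]

theorem subInt_subset_Icc_zero_last (hx : Monotone x) (n : Fin N) :
    subInt x n ⊆ Set.Icc (x 0) (x (Fin.last N)) :=
  (subInt_subset_Icc x n).trans
    (Set.Icc_subset_Icc (hx (Fin.zero_le _)) (hx (Fin.le_last _)))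

theorem pairwise_disjoint_subInt (hx : Monotone x) : Pairwise (Disjoint on subInt x) := by
  suffices ∀ m n : Fin N, m < n → Disjoint (subInt x m) (subInt x n) from
    fun m n hmn => hmn.lt_or_gt.elim (this m n) fun h => (this n m h).symm
  intro m n hmn
  have hn : subInt x n = Set.Ioc (x n.castSucc) (x n.succ) := by
    rw [subInt, if_neg (by rw [Fin.lt_def] at hmn; omega)]
  have hmn' : x m.succ ≤ x n.castSucc := hx (Fin.succ_le_castSucc_iff.2 hmn)
  rw [hn, Set.disjoint_left]
  exact fun t htm htn => (htn.1.trans_le ((subInt_subset_Icc x m htm).2.trans hmn')).false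

theorem ae_mem_iUnion_subInt :
    ∀ᵐ t ∂volume.restrict (Set.Icc (x 0) (x (Fin.last N))), t ∈ ⋃ n, subInt x n := by
  rw [← Measure.restrict_congr_set Ioc_ae_eq_Icc]
  filter_upwards [ae_restrict_mem measurableSet_Ioc] with t ht
  exact Set.iUnion_mono (Ioc_subset_subInt x) (Fin.Ioc_subset_iUnion_Ioc_castSucc_succ x ht)

theorem map_Linv_restrict_subInt (hx : StrictMono x) (n : Fin N) :
    ((volume.restrict (Set.Icc (x 0) (x (Fin.last N)))).restrict (subInt x n)).map (Linv x n)
      = ENNReal.ofReal ((x n.succ - x n.castSucc) / (x (Fin.last N) - x 0)) •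
          volume.restrict (Set.Icc (x 0) (x (Fin.last N))) := by
  have hd : 0 < x n.succ - x n.castSucc := sub_pos.2 (hx Fin.castSucc_lt_succ)
  have hℓ : 0 < x (Fin.last N) - x 0 := sub_pos.2 (hx.apply_zero_lt_apply_last n.pos)
  set s := (x (Fin.last N) - x 0) / (x n.succ - x n.castSucc)
  have hL : Linv x n = fun t => s * t + (x 0 - s * x n.castSucc) := by
    funext t
    simp only [Linv, s]
    ring
  rw [Measure.restrict_restrict (measurableSet_subInt x n),
    Set.inter_eq_left.2 (subInt_subset_Icc_zero_last hx.monotone n),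
    Measure.restrict_congr_set (subInt_ae_eq_Icc x n), hL,
    map_volume_restrict_Icc_affine (div_pos hℓ hd), inv_div]
  congr 3 <;> simp only [s] <;> field_simp <;> ring

theorem sum_length_div_eq_one (hx : StrictMono x) (hN : 0 < N) :
    ∑ n : Fin N, ENNReal.ofReal ((x n.succ - x n.castSucc) / (x (Fin.last N) - x 0)) = 1 := by
  have hℓ : 0 < x (Fin.last N) - x 0 := sub_pos.2 (hx.apply_zero_lt_apply_last hN)
  rw [← ENNReal.ofReal_sum_of_nonneg fun n _ =>
      div_nonneg (sub_nonneg.2 (hx.monotone (Fin.castSucc_le_succ n))) hℓ.le,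
    ← Finset.sum_div, Fin.sum_succ_sub_castSucc, div_self hℓ.ne', ENNReal.ofReal_one]

theorem measurable_Linv (x : Fin (N + 1) → ℝ) (n : Fin N) : Measurable (Linv x n) := by
  unfold Linv
  fun_prop

variable (x) in
def piecewiseLinv (t : ℝ) : ℝ :=
  ∑ n, (subInt x n).indicator (Linv x n) t

theorem piecewiseLinv_eq (hx : Monotone x) {n : Fin N} {t : ℝ} (ht : t ∈ subInt x n) :
    piecewiseLinv x t = Linv x n t := by
  rw [piecewiseLinv, Finset.sum_eq_single n, Set.indicator_of_mem ht]
  · exact fun m _ hmn =>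
      Set.indicator_of_notMem ((pairwise_disjoint_subInt hx hmn).notMem_of_mem_right ht) _
  · simp

theorem measurable_piecewiseLinv : Measurable (piecewiseLinv x) :=
  Finset.measurable_sum _ fun n _ => (measurable_Linv x n).indicator (measurableSet_subInt x n)

theorem measurePreserving_piecewiseLinv (hx : StrictMono x) (hN : 0 < N) :
    MeasurePreserving (piecewiseLinv x) (volume.restrict (Set.Icc (x 0) (x (Fin.last N))))
      (volume.restrict (Set.Icc (x 0) (x (Fin.last N)))) :=
  ⟨measurable_piecewiseLinv, Measure.map_eq_of_map_restrict_eq_smul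
    measurable_piecewiseLinv.aemeasurable (measurableSet_subInt x)
    (pairwise_disjoint_subInt hx.monotone) ae_mem_iUnion_subInt
    (fun _ _ ht => piecewiseLinv_eq hx.monotone ht) (map_Linv_restrict_subInt hx)
    (sum_length_div_eq_one hx hN)⟩

theorem SelfRef.ae_eq_const_mul_comp_piecewiseLinv (hx : StrictMono x)
    {a : Fin N → ℝ → ℝ} {c : Fin N → ℝ}
    (ha : ∀ n, a n =ᵐ[volume.restrict (Set.Icc (x 0) (x (Fin.last N)))] fun _ => c n)
    {f b h : ℝ → ℝ} (hh : SelfRef (volume.restrict (Set.Icc (x 0) (x (Fin.last N)))) x a f b h)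
    (hf : f =ᵐ[volume.restrict (Set.Icc (x 0) (x (Fin.last N)))] 0) :
    ∀ᵐ t ∂volume.restrict (Set.Icc (x 0) (x (Fin.last N))),
      ∃ n, h t = c n * (h - b) (piecewiseLinv x t) := by
  have hscale : ∀ n, ∀ᵐ t ∂volume.restrict (Set.Icc (x 0) (x (Fin.last N))),
      t ∈ subInt x n → a n (Linv x n t) = c n := fun n => by
    rw [← ae_restrict_iff' (measurableSet_subInt x n)]
    refine ae_of_ae_map (p := fun y => a n y = c n) (measurable_Linv x n).aemeasurable ?_
    rw [map_Linv_restrict_subInt hx]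
    exact Measure.ae_smul_measure (ha n) _
  filter_upwards [ae_all_iff.2 hh, ae_all_iff.2 hscale, hf, ae_mem_iUnion_subInt]
    with t hht hst hft htU
  obtain ⟨n, hn⟩ := Set.mem_iUnion.1 htU
  refine ⟨n, ?_⟩
  rw [hht n hn, hst n hn, hft, piecewiseLinv_eq hx.monotone hn, Pi.zero_apply, zero_add,
    Pi.sub_apply]

end Partition

theorem partial_convolution_null_seed_constant_scales_general
    (N : ℕ) (hN : 2 ≤ N) (x : Fin (N + 1) → ℝ) (hx : StrictMono x)
    (μ : Measure ℝ) (hμ : μ = volume.restrict (Set.Icc (x 0) (x (Fin.last N))))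
    (p : ℝ≥0∞)
    (α : Fin N → Lp ℝ ∞ μ)
    (Λ : ℝ) (hΛdef : Λ = ⨆ n : Fin N, ‖α n‖)
    (P₁ : Lp ℝ p μ → Lp ℝ p μ)
    (hP₁ : ∀ b : Lp ℝ p μ, SelfRef μ x (fun n => ⇑(α n)) ⇑(0 : Lp ℝ p μ) ⇑b ⇑(P₁ b))
    (hconst : ∃ c : Fin N → ℝ, ∀ n : Fin N, (α n : ℝ → ℝ) =ᵐ[μ] fun _ => c n) :
    (∀ b : Lp ℝ p μ, ‖P₁ b‖ ≤ Λ * ‖P₁ b - b‖) ∧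
    ((∀ n : Fin N, ((α n : ℝ → ℝ) =ᵐ[μ] fun _ => Λ) ∨ ((α n : ℝ → ℝ) =ᵐ[μ] fun _ => -Λ)) →
      ∀ b : Lp ℝ p μ, ‖P₁ b‖ = Λ * ‖P₁ b - b‖) := by
  subst hμ
  obtain ⟨c, hc⟩ := hconst
  have hμ0 : volume.restrict (Set.Icc (x 0) (x (Fin.last N))) ≠ 0 := by
    simpa [Measure.restrict_eq_zero] using hx.apply_zero_lt_apply_last (by omega)
  have hαc : ∀ n, ‖α n‖ = |c n| := fun n => Lp.norm_eq_of_ae_eq_const hμ0 (hc n)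
  have hΛ0 : 0 ≤ Λ := hΛdef ▸ Real.iSup_nonneg fun n => norm_nonneg _
  have hcΛ : ∀ n, |c n| ≤ Λ := fun n => by
    rw [hΛdef, ← hαc n]
    exact le_ciSup (f := fun n => ‖α n‖) (Set.finite_range _).bddAbove n
  have hφ := measurePreserving_piecewiseLinv hx (by omega)
  have key : ∀ b : Lp ℝ p _, ∀ᵐ t ∂_, ∃ n, P₁ b t = c n * (P₁ b - b) (piecewiseLinv x t) :=
    fun b => by
      filter_upwards [(hP₁ b).ae_eq_const_mul_comp_piecewiseLinv hx hc (Lp.coeFn_zero ℝ p _),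
        hφ.quasiMeasurePreserving.ae_eq (Lp.coeFn_sub (P₁ b) b)] with t ⟨n, ht⟩ hsub
      exact ⟨n, ht.trans (congrArg _ hsub.symm)⟩
  refine ⟨fun b => Lp.norm_le_mul_norm_of_eLpNorm_le hΛ0 ?_,
    fun hpm b => Lp.norm_eq_mul_norm_of_eLpNorm_eq hΛ0 ?_⟩
  · refine eLpNorm_le_mul_of_norm_le_comp hφ (Lp.aestronglyMeasurable _) hΛ0 ?_
    filter_upwards [key b] with t ⟨n, ht⟩
    rw [ht, norm_mul, Real.norm_eq_abs]
    gcongr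
    exact hcΛ n
  · refine eLpNorm_eq_mul_of_norm_eq_comp hφ (Lp.aestronglyMeasurable _) hΛ0 ?_
    filter_upwards [key b] with t ⟨n, ht⟩
    rw [ht, norm_mul, Real.norm_eq_abs, ← hαc n]
    rcases hpm n with h | h <;> simp [Lp.norm_eq_of_ae_eq_const hμ0 h, abs_of_nonneg hΛ0]

/-- If the scale functions are constant then
`‖0 *_T b‖_p ≤ Λ ‖(0 *_T b) − b‖_p`; if moreover every `α n` equals `Λ` or `−Λ`
identically, then equality holds. -/
theorem partial_convolution_null_seed_constant_scales
    (N : ℕ) (hN : 2 ≤ N) (x : Fin (N + 1) → ℝ) (hx : StrictMono x)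
    (μ : Measure ℝ) (hμ : μ = volume.restrict (Set.Icc (x 0) (x (Fin.last N))))
    (p : ℝ≥0∞) [Fact (1 ≤ p)]
    (α : Fin N → Lp ℝ ∞ μ)
    (Λ : ℝ) (hΛdef : Λ = ⨆ n : Fin N, ‖α n‖) (hΛ : Λ < 1)
    (P₁ : Lp ℝ p μ → Lp ℝ p μ)
    (hP₁ : ∀ b : Lp ℝ p μ, SelfRef μ x (fun n => ⇑(α n)) ⇑(0 : Lp ℝ p μ) ⇑b ⇑(P₁ b))
    (hconst : ∃ c : Fin N → ℝ, ∀ n : Fin N, (α n : ℝ → ℝ) =ᵐ[μ] fun _ => c n) :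
    (∀ b : Lp ℝ p μ, ‖P₁ b‖ ≤ Λ * ‖P₁ b - b‖) ∧
    ((∀ n : Fin N, ((α n : ℝ → ℝ) =ᵐ[μ] fun _ => Λ) ∨ ((α n : ℝ → ℝ) =ᵐ[μ] fun _ => -Λ)) →
      ∀ b : Lp ℝ p μ, ‖P₁ b‖ = Λ * ‖P₁ b - b‖) :=
  partial_convolution_null_seed_constant_scales_general N hN x hx μ hμ p α Λ hΛdef P₁ hP₁ hconst

end
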